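/- arXiv:2505.06230 — 2 statements merged into one kernel-verified Lean document; each statement's English description precedes it below -/
import Mathlib

section
/- With notation as in the splitting f = f⁺(z)z + a₀ + w f⁻(w) of a bounded holomorphic function on the conservative hyperbola H_r (r > 1), the parts without the constant term satisfy ‖f⁺‖_𝔻 ≤ (2r²−1)/(r²−1) · ‖f‖_{H_r} and ‖f⁻‖_𝔻 ≤ (2r²−1)/(r²−1) · ‖f‖_{H_r}. -/
/-!
Cauchy's estimate on the circles `‖ζ‖ = ρ`, `1/r < ρ < r`, gives `‖c k‖ * r ^ |k| ≤ M` in the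
limit. For `‖y‖ = t` with `1/r² < t < 1` put `ζ = r y`; then
`F ζ = c 0 + y f⁺(y) + w f⁻(w)` with `w = 1/(r² y)`, and since `f⁻` has coefficients bounded by
`M`, `‖w f⁻(w)‖ ≤ M / (r² t - 1)`. So `t ‖f⁺(y)‖ ≤ 2M + M / (r² t - 1)` on the circle of
radius `t`, the maximum modulus principle carries this bound inside, and `t → 1` gives
`2M + M / (r² - 1) = (2r² - 1) / (r² - 1) · M`. The bound for `f⁻` is the bound for `f⁺` applied
to `ζ ↦ F ζ⁻¹`, whose coefficients are `k ↦ c (-k)`.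
-/

open Complex Filter Metric Set Real
open scoped Topology

section BoundedCoefficients

variable {a : ℕ → ℂ} {M : ℝ}

theorem summable_norm_mul_pow_of_norm_le (ha : ∀ n, ‖a n‖ ≤ M) {z : ℂ} (hz : ‖z‖ < 1) :
    Summable fun n => ‖a n * z ^ n‖ :=
  .of_nonneg_of_le (fun _ => norm_nonneg _)
    (fun n => by rw [norm_mul, norm_pow]; gcongr; exact ha n)
    ((summable_geometric_of_lt_one (norm_nonneg z) hz).mul_left M)

theorem norm_tsum_mul_pow_le (ha : ∀ n, ‖a n‖ ≤ M) {z : ℂ} (hz : ‖z‖ < 1) :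
    ‖∑' n, a n * z ^ n‖ ≤ M / (1 - ‖z‖) := by
  have hgeom := summable_geometric_of_lt_one (norm_nonneg z) hz
  calc ‖∑' n, a n * z ^ n‖ ≤ ∑' n, ‖a n * z ^ n‖ :=
        norm_tsum_le_tsum_norm (summable_norm_mul_pow_of_norm_le ha hz)
    _ ≤ ∑' n, M * ‖z‖ ^ n :=
        (summable_norm_mul_pow_of_norm_le ha hz).tsum_le_tsum
          (fun n => by rw [norm_mul, norm_pow]; gcongr; exact ha n) (hgeom.mul_left M)
    _ = M / (1 - ‖z‖) := by
        rw [tsum_mul_left, tsum_geometric_of_lt_one (norm_nonneg z) hz, div_eq_mul_inv]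

theorem differentiableOn_tsum_mul_pow (ha : ∀ n, ‖a n‖ ≤ M) :
    DifferentiableOn ℂ (fun z => ∑' n, a n * z ^ n) (ball 0 1) := by
  refine differentiableOn_of_locally_differentiableOn fun z hz => ?_
  rw [mem_ball_zero_iff] at hz
  obtain ⟨s, hzs, hs1⟩ := exists_between hz
  have hs0 : 0 ≤ s := (norm_nonneg z).trans hzs.le
  refine ⟨ball 0 s, isOpen_ball, mem_ball_zero_iff.2 hzs, ?_⟩
  refine (Complex.differentiableOn_tsum_of_summable_norm (u := fun n => M * s ^ n)
    ((summable_geometric_of_lt_one hs0 hs1).mul_left M) (fun n => by fun_prop) isOpen_ball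
    fun n w hw => ?_).mono inter_subset_right
  rw [norm_mul, norm_pow]
  gcongr
  · exact (norm_nonneg _).trans (ha 0)
  · exact ha n
  · exact (mem_ball_zero_iff.1 hw).le

end BoundedCoefficients

theorem norm_le_of_tendsto_of_forall_sphere_le {g : ℂ → ℂ} (hg : DifferentiableOn ℂ g (ball 0 1))
    {B : ℝ → ℝ} {L t₀ : ℝ} (ht₀ : t₀ < 1) (hB : Tendsto B (𝓝[<] 1) (𝓝 L))
    (hbound : ∀ t ∈ Ioo t₀ 1, ∀ y ∈ sphere (0 : ℂ) t, ‖g y‖ ≤ B t) {z : ℂ} (hz : ‖z‖ < 1) :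
    ‖g z‖ ≤ L := by
  refine ge_of_tendsto hB ?_
  filter_upwards [Ioo_mem_nhdsLT (max_lt ht₀ hz)] with t ht
  have ht0 : 0 < t := (norm_nonneg z).trans_lt ((le_max_right _ _).trans_lt ht.1)
  refine Complex.norm_le_of_forall_mem_frontier_norm_le (isBounded_ball (x := (0 : ℂ)) (r := t))
    ?_ ?_ ?_
  · refine DifferentiableOn.diffContOnCl (hg.mono ?_)
    rw [closure_ball 0 ht0.ne']
    exact closedBall_subset_ball ht.2
  · rw [frontier_ball 0 ht0.ne']
    exact hbound t ⟨(le_max_left _ _).trans_lt ht.1, ht.2⟩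
  · rw [closure_ball 0 ht0.ne', mem_closedBall_zero_iff]
    exact ((le_max_right _ _).trans_lt ht.1).le

theorem hasSum_circleIntegral_of_norm_le {E : Type*} [NormedAddCommGroup E] [NormedSpace ℂ E]
    [CompleteSpace E] {ι : Type*} [Countable ι] {f : ι → ℂ → E} {g : ℂ → E} {c : ℂ} {R : ℝ}
    {u : ι → ℝ} (hR : 0 ≤ R) (hf : ∀ i, CircleIntegrable (f i) c R) (hu : Summable u)
    (hfu : ∀ i, ∀ z ∈ sphere c R, ‖f i z‖ ≤ u i)
    (hfg : ∀ z ∈ sphere c R, HasSum (fun i => f i z) (g z)) :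
    HasSum (fun i => ∮ z in C(c, R), f i z) (∮ z in C(c, R), g z) := by
  refine intervalIntegral.hasSum_integral_of_dominated_convergence (fun i _ => R * u i)
    (fun i => ((circleIntegrable_iff R).1 (hf i)).def'.aestronglyMeasurable)
    (fun i => .of_forall fun θ _ => ?_) (.of_forall fun _ _ => hu.mul_left R)
    intervalIntegrable_const (.of_forall fun θ _ => ?_)
  · simp only [deriv_circleMap, norm_smul, norm_mul, norm_circleMap_zero, abs_of_nonneg hR,
      norm_I, mul_one]
    exact mul_le_mul_of_nonneg_left (hfu i _ (circleMap_mem_sphere c hR θ)) hR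
  · exact (hfg _ (circleMap_mem_sphere c hR θ)).const_smul _

theorem circleIntegral_zpow_mul_zpow {ρ : ℝ} (hρ : 0 < ρ) (k m : ℤ) :
    (∮ z in C(0, ρ), z ^ (-k - 1) * z ^ m) = if m = k then 2 * π * I else 0 := by
  have hsphere : EqOn (fun z : ℂ => z ^ (-k - 1) * z ^ m) (fun z => (z - 0) ^ (m - k - 1))
      (sphere 0 ρ) := fun z hz => by
    have hz0 : z ≠ 0 := ne_of_mem_sphere hz hρ.ne'
    simp only [sub_zero, ← zpow_add₀ hz0]
    ring_nf
  rw [circleIntegral.integral_congr hρ.le hsphere]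
  split_ifs with hmk
  · subst hmk
    simp only [sub_self, zero_sub, zpow_neg_one]
    exact circleIntegral.integral_sub_inv_of_mem_ball (mem_ball_self hρ)
  · exact circleIntegral.integral_sub_zpow_of_ne (by omega) _ _ _

theorem circleIntegral_zpow_mul_eq_of_hasSum {c : ℤ → ℂ} {F : ℂ → ℂ} {ρ : ℝ} (hρ : 0 < ρ)
    (hsum : ∀ ζ ∈ sphere (0 : ℂ) ρ, HasSum (fun k => c k * ζ ^ k) (F ζ)) (k : ℤ) :
    (∮ z in C(0, ρ), z ^ (-k - 1) * F z) = c k * (2 * π * I) := by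
  have hρ_mem : (ρ : ℂ) ∈ sphere (0 : ℂ) ρ := by simp [abs_of_pos hρ]
  have hsumm : Summable fun m => ‖c m‖ * ρ ^ m := by
    simpa [norm_mul, norm_zpow, abs_of_pos hρ] using (hsum ρ hρ_mem).summable.norm
  have hterms : HasSum (fun m => ∮ z in C(0, ρ), z ^ (-k - 1) * (c m * z ^ m))
      (∮ z in C(0, ρ), z ^ (-k - 1) * F z) := by
    refine hasSum_circleIntegral_of_norm_le hρ.le (fun m => ?_) (hsumm.mul_left (ρ ^ (-k - 1)))
      (fun m ζ hζ => ?_) (fun ζ hζ => (hsum ζ hζ).mul_left _)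
    · refine ContinuousOn.circleIntegrable hρ.le (.mul ?_ (continuousOn_const.mul ?_)) <;>
        exact continuousOn_zpow₀ _ |>.mono fun z hz => ne_of_mem_sphere hz hρ.ne'
    · rw [norm_mul, norm_mul, norm_zpow, norm_zpow, mem_sphere_zero_iff_norm.1 hζ]
  refine hterms.unique ?_
  convert hasSum_ite_eq k (c k * (2 * π * I)) using 2 with m
  simp_rw [mul_left_comm _ (c m)]
  rw [circleIntegral.integral_const_mul, circleIntegral_zpow_mul_zpow hρ]
  split_ifs with h <;> simp [h]

theorem norm_coeff_mul_zpow_le_of_hasSum {c : ℤ → ℂ} {F : ℂ → ℂ} {ρ M : ℝ} (hρ : 0 < ρ)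
    (hsum : ∀ ζ ∈ sphere (0 : ℂ) ρ, HasSum (fun k => c k * ζ ^ k) (F ζ))
    (hM : ∀ ζ ∈ sphere (0 : ℂ) ρ, ‖F ζ‖ ≤ M) (k : ℤ) :
    ‖c k‖ * ρ ^ k ≤ M := by
  have hbound := circleIntegral.norm_integral_le_of_norm_le_const hρ.le
    (f := fun z => z ^ (-k - 1) * F z) (C := ρ ^ (-k - 1) * M) fun ζ hζ => by
      rw [norm_mul, norm_zpow, mem_sphere_zero_iff_norm.1 hζ]
      exact mul_le_mul_of_nonneg_left (hM ζ hζ) (by positivity)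
  rw [circleIntegral_zpow_mul_eq_of_hasSum hρ hsum, norm_mul, norm_mul, norm_mul, norm_I, mul_one,
    Complex.norm_ofNat, norm_real, Real.norm_of_nonneg pi_pos.le] at hbound
  have hρk : ρ * ρ ^ (-k - 1) * ρ ^ k = 1 := by
    rw [mul_assoc, ← zpow_add₀ hρ.ne', ← zpow_one_add₀ hρ.ne', show 1 + (-k - 1 + k) = 0 by ring,
      zpow_zero]
  have hck : ‖c k‖ ≤ ρ * ρ ^ (-k - 1) * M := by nlinarith [pi_pos]
  calc ‖c k‖ * ρ ^ k ≤ ρ * ρ ^ (-k - 1) * M * ρ ^ k := by gcongr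
    _ = M := by linear_combination M * hρk

/-- The paper's `f⁺`; its `f⁻` is `laurentPlus r (fun k => c (-k))`. -/
noncomputable def laurentPlus (r : ℝ) (c : ℤ → ℂ) (z : ℂ) : ℂ :=
  ∑' k : ℕ, c (k + 1) * (r : ℂ) ^ (k + 1) * z ^ k

section Annulus

variable {r M : ℝ} {c : ℤ → ℂ} {F : ℂ → ℂ}

theorem forall_annulus_inv (hr : 0 < r) {P : ℂ → Prop}
    (hP : ∀ ζ : ℂ, 1 / r < ‖ζ‖ → ‖ζ‖ < r → P ζ) :
    ∀ ζ : ℂ, 1 / r < ‖ζ‖ → ‖ζ‖ < r → P ζ⁻¹ := by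
  intro ζ h₁ h₂
  have hζ : 0 < ‖ζ‖ := lt_trans (by positivity) h₁
  refine hP _ ?_ ?_ <;> rw [norm_inv] <;> rw [one_div] at *
  exacts [inv_strictAnti₀ hζ h₂, (inv_lt_comm₀ hr hζ).1 h₁]

theorem hasSum_neg_zpow_inv (hr : 0 < r)
    (hsum : ∀ ζ : ℂ, 1 / r < ‖ζ‖ → ‖ζ‖ < r → HasSum (fun k : ℤ => c k * ζ ^ k) (F ζ)) :
    ∀ ζ : ℂ, 1 / r < ‖ζ‖ → ‖ζ‖ < r → HasSum (fun k : ℤ => c (-k) * ζ ^ k) (F ζ⁻¹) :=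
  fun ζ h₁ h₂ => by
    simpa [Function.comp_def] using (Equiv.neg ℤ).hasSum_iff.2 (forall_annulus_inv hr hsum ζ h₁ h₂)

theorem norm_coeff_mul_pow_le (hr : 1 < r)
    (hsum : ∀ ζ : ℂ, 1 / r < ‖ζ‖ → ‖ζ‖ < r → HasSum (fun k : ℤ => c k * ζ ^ k) (F ζ))
    (hM : ∀ ζ : ℂ, 1 / r < ‖ζ‖ → ‖ζ‖ < r → ‖F ζ‖ ≤ M) (m : ℕ) :
    ‖c m * (r : ℂ) ^ m‖ ≤ M := by
  have hr0 : 0 < r := one_pos.trans hr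
  rw [norm_mul, norm_pow, norm_real, Real.norm_of_nonneg hr0.le]
  have hinv : 1 / r < r := by rw [div_lt_iff₀ hr0]; nlinarith
  have hIoo : Ioo (1 / r) r ⊆ {ρ : ℝ | ‖c m‖ * ρ ^ m ≤ M} := fun ρ hρ => by
    have hann : ∀ ζ ∈ sphere (0 : ℂ) ρ, 1 / r < ‖ζ‖ ∧ ‖ζ‖ < r :=
      fun ζ hζ => (mem_sphere_zero_iff_norm.1 hζ).symm ▸ hρ
    simpa using norm_coeff_mul_zpow_le_of_hasSum (lt_trans (by positivity) hρ.1)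
      (fun ζ hζ => hsum ζ (hann ζ hζ).1 (hann ζ hζ).2)
      (fun ζ hζ => hM ζ (hann ζ hζ).1 (hann ζ hζ).2) m
  refine (isClosed_le (by fun_prop) continuous_const).closure_subset_iff.2 hIoo ?_
  rw [closure_Ioo hinv.ne]
  exact right_mem_Icc.2 hinv.le

theorem eq_laurent_split_of_hasSum (hr : 0 < r)
    (hpos : ∀ n : ℕ, ‖c (n + 1) * (r : ℂ) ^ (n + 1)‖ ≤ M)
    (hneg : ∀ n : ℕ, ‖c (-(n + 1)) * (r : ℂ) ^ (n + 1)‖ ≤ M) {ζ s : ℂ}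
    (hs : HasSum (fun k : ℤ => c k * ζ ^ k) s) (h₁ : 1 / r < ‖ζ‖) (h₂ : ‖ζ‖ < r) :
    s = c 0 + ζ / r * laurentPlus r c (ζ / r)
      + (r * ζ)⁻¹ * laurentPlus r (fun k => c (-k)) (r * ζ)⁻¹ := by
  have hr' : (r : ℂ) ≠ 0 := ofReal_ne_zero.2 hr.ne'
  have hζ : ζ ≠ 0 := norm_pos_iff.1 (lt_trans (by positivity) h₁)
  have hz : ‖ζ / r‖ < 1 := by
    rw [norm_div, norm_real, Real.norm_of_nonneg hr.le, div_lt_one hr]; exact h₂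
  have hw : ‖(r * ζ)⁻¹‖ < 1 := by
    rw [norm_inv, norm_mul, norm_real, Real.norm_of_nonneg hr.le, inv_lt_one₀ (by positivity),
      ← div_lt_iff₀' hr]
    exact h₁
  have hshift : HasSum (fun n : ℕ => c (n + 1 : ℕ) * ζ ^ ((n + 1 : ℕ) : ℤ))
      (ζ / r * laurentPlus r c (ζ / r)) := by
    refine ((summable_norm_mul_pow_of_norm_le hpos hz).of_norm
      |>.hasSum.mul_left (ζ / r)).congr_fun fun n => ?_
    rw [zpow_natCast, div_pow, Nat.cast_succ]
    field_simp
    ring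
  have hplus := (hasSum_nat_add_iff (f := fun n : ℕ => c n * ζ ^ (n : ℤ)) 1).1 hshift
  simp only [Finset.sum_range_one, Nat.cast_zero, zpow_zero, mul_one] at hplus
  have hminus : HasSum (fun n : ℕ => c (-(n + 1)) * ζ ^ (-(n + 1 : ℤ)))
      ((r * ζ)⁻¹ * laurentPlus r (fun k => c (-k)) (r * ζ)⁻¹) := by
    refine ((summable_norm_mul_pow_of_norm_le hneg hw).of_norm
      |>.hasSum.mul_left (r * ζ)⁻¹).congr_fun fun n => ?_
    rw [zpow_neg, ← Nat.cast_succ, zpow_natCast, inv_pow, mul_pow, pow_succ, pow_succ]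
    field_simp
  rw [hs.unique (HasSum.of_nat_of_neg_add_one (f := fun k : ℤ => c k * ζ ^ k) hplus hminus)]
  ring

theorem norm_mul_laurentPlus_le (hr : 0 < r)
    (hpos : ∀ n : ℕ, ‖c (n + 1) * (r : ℂ) ^ (n + 1)‖ ≤ M)
    (hneg : ∀ n : ℕ, ‖c (-(n + 1)) * (r : ℂ) ^ (n + 1)‖ ≤ M) (hc0 : ‖c 0‖ ≤ M)
    (hsum : ∀ ζ : ℂ, 1 / r < ‖ζ‖ → ‖ζ‖ < r → HasSum (fun k : ℤ => c k * ζ ^ k) (F ζ))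
    (hM : ∀ ζ : ℂ, 1 / r < ‖ζ‖ → ‖ζ‖ < r → ‖F ζ‖ ≤ M) {y : ℂ}
    (hy₁ : 1 / r ^ 2 < ‖y‖) (hy₂ : ‖y‖ < 1) :
    ‖y‖ * ‖laurentPlus r c y‖ ≤ 2 * M + M / (r ^ 2 * ‖y‖ - 1) := by
  have hζ : ‖(r : ℂ) * y‖ = r * ‖y‖ := by rw [norm_mul, norm_real, Real.norm_of_nonneg hr.le]
  have hry : 1 < r ^ 2 * ‖y‖ := by rwa [div_lt_iff₀' (by positivity)] at hy₁
  have hy₀ : ‖y‖ ≠ 0 := (lt_trans (by positivity) hy₁).ne'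
  have h₁ : 1 / r < ‖(r : ℂ) * y‖ := by rw [hζ, div_lt_iff₀' hr]; nlinarith
  have h₂ : ‖(r : ℂ) * y‖ < r := by rw [hζ]; nlinarith
  have hsplit := eq_laurent_split_of_hasSum hr hpos hneg (hsum _ h₁ h₂) h₁ h₂
  rw [mul_div_cancel_left₀ _ (ofReal_ne_zero.2 hr.ne')] at hsplit
  set w := ((r : ℂ) * (r * y))⁻¹
  have hw : ‖w‖ = (r ^ 2 * ‖y‖)⁻¹ := by
    rw [norm_inv, norm_mul, hζ, norm_real, Real.norm_of_nonneg hr.le]; ring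
  have hw1 : ‖w‖ < 1 := by rw [hw]; exact inv_lt_one_of_one_lt₀ hry
  have htail : ‖w * laurentPlus r (fun k => c (-k)) w‖ ≤ M / (r ^ 2 * ‖y‖ - 1) :=
    calc ‖w * laurentPlus r (fun k => c (-k)) w‖ ≤ ‖w‖ * (M / (1 - ‖w‖)) := by
          rw [norm_mul]; gcongr; exact norm_tsum_mul_pow_le hneg hw1
      _ = M / (r ^ 2 * ‖y‖ - 1) := by
          rw [hw]; field_simp
  calc ‖y‖ * ‖laurentPlus r c y‖
      = ‖F (r * y) - c 0 - w * laurentPlus r (fun k => c (-k)) w‖ := by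
        rw [hsplit, ← norm_mul]; ring_nf
    _ ≤ ‖F (r * y)‖ + ‖c 0‖ + ‖w * laurentPlus r (fun k => c (-k)) w‖ :=
        (norm_sub_le _ _).trans (add_le_add_left (norm_sub_le _ _) _)
    _ ≤ 2 * M + M / (r ^ 2 * ‖y‖ - 1) := by linarith [hM _ h₁ h₂]

theorem norm_laurentPlus_le (hr : 1 < r)
    (hsum : ∀ ζ : ℂ, 1 / r < ‖ζ‖ → ‖ζ‖ < r → HasSum (fun k : ℤ => c k * ζ ^ k) (F ζ))
    (hM : ∀ ζ : ℂ, 1 / r < ‖ζ‖ → ‖ζ‖ < r → ‖F ζ‖ ≤ M) {z : ℂ} (hz : ‖z‖ < 1) :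
    ‖laurentPlus r c z‖ ≤ (2 * r ^ 2 - 1) / (r ^ 2 - 1) * M := by
  have hr0 : 0 < r := one_pos.trans hr
  have hpos (n : ℕ) : ‖c (n + 1) * (r : ℂ) ^ (n + 1)‖ ≤ M := by
    exact_mod_cast norm_coeff_mul_pow_le hr hsum hM (n + 1)
  have hneg (n : ℕ) : ‖c (-(n + 1)) * (r : ℂ) ^ (n + 1)‖ ≤ M := by
    simpa using norm_coeff_mul_pow_le hr (hasSum_neg_zpow_inv hr0 hsum)
      (forall_annulus_inv hr0 hM) (n + 1)
  have hc0 : ‖c 0‖ ≤ M := by simpa using norm_coeff_mul_pow_le hr hsum hM 0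
  have hsphere : ∀ t ∈ Ioo (1 / r ^ 2) 1, ∀ y ∈ sphere (0 : ℂ) t,
      ‖laurentPlus r c y‖ ≤ (2 * M + M / (r ^ 2 * t - 1)) / t := by
    rintro t ⟨ht₁, ht₂⟩ y hy
    rw [mem_sphere_zero_iff_norm] at hy
    subst hy
    rw [le_div_iff₀ (lt_trans (by positivity) ht₁), mul_comm]
    exact norm_mul_laurentPlus_le hr0 hpos hneg hc0 hsum hM ht₁ ht₂
  have hlim : Tendsto (fun t => (2 * M + M / (r ^ 2 * t - 1)) / t) (𝓝[<] 1)
      (𝓝 ((2 * r ^ 2 - 1) / (r ^ 2 - 1) * M)) := by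
    have hr2 : r ^ 2 - 1 ≠ 0 := by nlinarith
    have : ContinuousAt (fun t => (2 * M + M / (r ^ 2 * t - 1)) / t) 1 := by
      fun_prop (disch := norm_num [hr2])
    convert this.tendsto.mono_left nhdsWithin_le_nhds using 2
    field_simp
    ring
  exact norm_le_of_tendsto_of_forall_sphere_le (differentiableOn_tsum_mul_pow hpos)
    (by rw [div_lt_one (by positivity)]; nlinarith) hlim hsphere hz

end Annulus

/-- With the splitting `f = f⁺(z)z + a₀ + w f⁻(w)` of a bounded holomorphic
function on the conservative hyperbola `H_r` (`r > 1`), given by Laurent data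
`F(ζ) = Σ c_k ζ^k` bounded by `M` on the annulus `1/r < |ζ| < r`, the parts without the
constant term satisfy `‖f⁺‖_𝔻 ≤ (2r²-1)/(r²-1) · M` and `‖f⁻‖_𝔻 ≤ (2r²-1)/(r²-1) · M`,
where `f⁺(z) = Σ_{k ≥ 1} c_k r^k z^{k-1}`, `f⁻(w) = Σ_{k ≥ 1} c_{-k} r^k w^{k-1}`. -/
theorem stmt4 (r M : ℝ) (hr : 1 < r) (c : ℤ → ℂ) (F : ℂ → ℂ)
    (hsum : ∀ ζ : ℂ, 1 / r < ‖ζ‖ → ‖ζ‖ < r →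
      HasSum (fun k : ℤ => c k * ζ ^ k) (F ζ))
    (hM : ∀ ζ : ℂ, 1 / r < ‖ζ‖ → ‖ζ‖ < r → ‖F ζ‖ ≤ M) :
    (∀ z : ℂ, ‖z‖ < 1 →
      ‖∑' k : ℕ, c (k + 1) * (r : ℂ) ^ (k + 1) * z ^ k‖
        ≤ (2 * r ^ 2 - 1) / (r ^ 2 - 1) * M) ∧
    (∀ w : ℂ, ‖w‖ < 1 →
      ‖∑' k : ℕ, c (-(k + 1 : ℕ)) * (r : ℂ) ^ (k + 1) * w ^ k‖
        ≤ (2 * r ^ 2 - 1) / (r ^ 2 - 1) * M) := by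
  have hr0 : 0 < r := one_pos.trans hr
  refine ⟨fun z hz => norm_laurentPlus_le hr hsum hM hz, fun w hw => ?_⟩
  simpa [laurentPlus] using
    norm_laurentPlus_le hr (hasSum_neg_zpow_inv hr0 hsum) (forall_annulus_inv hr0 hM) hw
end

section
/- With the notation of the previous dilation construction (Ẑ = [[Z, H₀],[0, W*]], Ŵ = [[W, −H₀*],[0, Z*]] built from (Z,W) in the quantum conservative hyperbola of type r), the operator Û := (r/(r+1/r))·(Ẑ + Ŵ*) on H ⊕ H is unitary. -/
/-!
With `B = A + r⁻²A⁻¹` we have `W* = r⁻² U A⁻¹`, so `Z + W* = U B` and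
`Ẑ + Ŵ* = diag(U, U) · [[B, S], [-S, B]]`. The first factor is unitary. Since `B` and `S` are
commuting self-adjoint operators with `B² + S² = (1 + r⁻²)²` and `r / (r + 1/r) = (1 + r⁻²)⁻¹`,
the rescaled second factor is a "rotation" `[[C, S'], [-S', C]]` with `C² + S'² = 1`, which is
unitary just like a rotation matrix.
-/

open ContinuousLinearMap

variable {H : Type*} [NormedAddCommGroup H] [InnerProductSpace ℂ H] [CompleteSpace H]

/-- The block operator `[[A, B],[C, D]]` acting on the Hilbert-space direct sum
`H ⊕ H = WithLp 2 (H × H)`. -/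
noncomputable def blockOp (A B C D : H →L[ℂ] H) :
    WithLp 2 (H × H) →L[ℂ] WithLp 2 (H × H) :=
  ((WithLp.prodContinuousLinearEquiv 2 ℂ H H).symm : H × H →L[ℂ] WithLp 2 (H × H)) ∘L
    ((A ∘L fst ℂ H H + B ∘L snd ℂ H H).prod (C ∘L fst ℂ H H + D ∘L snd ℂ H H)) ∘L
    ((WithLp.prodContinuousLinearEquiv 2 ℂ H H) : WithLp 2 (H × H) →L[ℂ] H × H)

theorem Commute.ringInverse_right {M₀ : Type*} [MonoidWithZero M₀] {a b : M₀}
    (h : Commute a b) : Commute a (Ring.inverse b) := by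
  by_cases hb : IsUnit b
  · rw [← hb.unit_spec] at h ⊢
    rw [Ring.inverse_unit]
    exact h.units_inv_right
  · rw [Ring.inverse_non_unit b hb]
    exact Commute.zero_right a

section blockOp

variable {E : Type*} [NormedAddCommGroup E] [InnerProductSpace ℂ E]
variable (A B C D A' B' C' D' : E →L[ℂ] E)

@[simp] lemma blockOp_apply_fst (x : WithLp 2 (E × E)) :
    (blockOp A B C D x).fst = A x.fst + B x.snd := rfl

@[simp] lemma blockOp_apply_snd (x : WithLp 2 (E × E)) :
    (blockOp A B C D x).snd = C x.fst + D x.snd := rfl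

lemma ext_of_fst_snd {X Y : WithLp 2 (E × E) →L[ℂ] WithLp 2 (E × E)}
    (h₁ : ∀ x, (X x).fst = (Y x).fst) (h₂ : ∀ x, (X x).snd = (Y x).snd) : X = Y :=
  ext fun x => WithLp.ofLp_injective 2 (Prod.ext (h₁ x) (h₂ x))

lemma blockOp_add :
    blockOp A B C D + blockOp A' B' C' D' = blockOp (A + A') (B + B') (C + C') (D + D') := by
  apply ext_of_fst_snd <;> intro x <;> simp <;> abel

lemma blockOp_mul :
    blockOp A B C D * blockOp A' B' C' D' =
      blockOp (A * A' + B * C') (A * B' + B * D') (C * A' + D * C') (C * B' + D * D') := by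
  apply ext_of_fst_snd <;> intro x <;> simp <;> abel

lemma blockOp_smul (c : ℂ) : c • blockOp A B C D = blockOp (c • A) (c • B) (c • C) (c • D) := by
  apply ext_of_fst_snd <;> intro x <;> simp

lemma blockOp_one_zero_zero_one : blockOp (1 : E →L[ℂ] E) 0 0 1 = 1 := by
  apply ext_of_fst_snd <;> intro x <;> simp

end blockOp

section adjoint

variable (A B C D : H →L[ℂ] H)

lemma adjoint_blockOp :
    adjoint (blockOp A B C D) = blockOp (adjoint A) (adjoint C) (adjoint B) (adjoint D) := by
  refine ((eq_adjoint_iff _ _).mpr fun x y => ?_).symm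
  simp only [WithLp.prod_inner_apply, WithLp.ofLp_fst, WithLp.ofLp_snd, blockOp_apply_fst,
    blockOp_apply_snd, inner_add_left, inner_add_right, adjoint_inner_left]
  ring

lemma star_blockOp : star (blockOp A B C D) = blockOp (star A) (star C) (star B) (star D) :=
  adjoint_blockOp A B C D

end adjoint

lemma blockOp_diag_mem_unitary {U : H →L[ℂ] H} (hU : U ∈ unitary (H →L[ℂ] H)) :
    blockOp U 0 0 U ∈ unitary (WithLp 2 (H × H) →L[ℂ] WithLp 2 (H × H)) := by
  constructor <;> simp [star_blockOp, blockOp_mul, hU, blockOp_one_zero_zero_one]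

lemma blockOp_rotation_mem_unitary {C S : H →L[ℂ] H} (hC : IsSelfAdjoint C)
    (hS : IsSelfAdjoint S) (hCS : Commute C S) (h : C ^ 2 + S ^ 2 = 1) :
    blockOp C S (-S) C ∈ unitary (WithLp 2 (H × H) →L[ℂ] WithLp 2 (H × H)) := by
  have h' : S ^ 2 + C ^ 2 = 1 := by rw [add_comm, h]
  constructor <;>
  · simp only [star_blockOp, hC.star_eq, hS.star_eq, star_neg, blockOp_mul, ← sq, neg_mul,
      mul_neg, hCS.eq, neg_sq, add_neg_cancel, neg_add_cancel, h, h', blockOp_one_zero_zero_one]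

lemma Complex.isSelfAdjoint_ofReal (t : ℝ) : IsSelfAdjoint (t : ℂ) := Complex.conj_ofReal t

lemma blockOp_add_adjoint_blockOp_of_polar {Z W U A S : H →L[ℂ] H} {t : ℝ}
    (hA : IsSelfAdjoint A) (hZ : Z = U * A) (hW : W = ((t : ℂ) • Ring.inverse A) * adjoint U) :
    blockOp Z (U * S) 0 (adjoint W) + adjoint (blockOp W (-(adjoint (U * S))) 0 (adjoint Z)) =
      blockOp U 0 0 U *
        blockOp (A + (t : ℂ) • Ring.inverse A) S (-S) (A + (t : ℂ) • Ring.inverse A) := by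
  have hW' : adjoint W = U * ((t : ℂ) • Ring.inverse A) := by
    rw [← star_eq_adjoint, hW, star_mul, star_eq_adjoint, adjoint_adjoint,
      ((Complex.isSelfAdjoint_ofReal t).smul hA.ringInverse).star_eq]
  rw [adjoint_blockOp, blockOp_add, blockOp_mul, hW', hZ]
  simp [mul_add, add_comm]

theorem stmt9_general (r : ℝ) (hr : 1 < r) (Z W U A S : H →L[ℂ] H)
    (hUl : adjoint U * U = 1) (hUr : U * adjoint U = 1)
    (hA : A.IsPositive) (hpolar : Z = U * A)
    (hpolarW : W = ((((r ^ 2)⁻¹ : ℝ) : ℂ) • Ring.inverse A) * adjoint U)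
    (hS : S.IsPositive)
    (hSsq : S ^ 2 = (((1 + (r ^ 2)⁻¹) ^ 2 : ℝ) : ℂ) • (1 : H →L[ℂ] H)
      - (A + (((r ^ 2)⁻¹ : ℝ) : ℂ) • Ring.inverse A) ^ 2)
    (hSA : Commute S A) :
    ∀ Uhat : WithLp 2 (H × H) →L[ℂ] WithLp 2 (H × H),
      Uhat = ((r / (r + 1 / r) : ℝ) : ℂ) •
        (blockOp Z (U * S) 0 (adjoint W)
          + adjoint (blockOp W (-(adjoint (U * S))) 0 (adjoint Z))) →
      adjoint Uhat * Uhat = 1 ∧ Uhat * adjoint Uhat = 1 := by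
  rintro _ rfl
  set B := A + (((r ^ 2)⁻¹ : ℝ) : ℂ) • Ring.inverse A
  set c : ℝ := r / (r + 1 / r)
  have hU : U ∈ unitary (H →L[ℂ] H) := ⟨hUl, hUr⟩
  have hB : IsSelfAdjoint B :=
    hA.isSelfAdjoint.add ((Complex.isSelfAdjoint_ofReal _).smul hA.isSelfAdjoint.ringInverse)
  have hBS : Commute B S := (hSA.add_right (hSA.ringInverse_right.smul_right _)).symm
  have hc : c ^ 2 * (1 + (r ^ 2)⁻¹) ^ 2 = 1 := by
    have : r ≠ 0 := by positivity
    simp only [c]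
    field_simp
  have hrot : ((c : ℂ) • B) ^ 2 + ((c : ℂ) • S) ^ 2 = 1 := by
    rw [smul_pow, smul_pow, ← smul_add, hSsq, add_sub_cancel, smul_smul, ← Complex.ofReal_pow,
      ← Complex.ofReal_mul, hc, Complex.ofReal_one, one_smul]
  have hfactor : (c : ℂ) • (blockOp Z (U * S) 0 (adjoint W)
      + adjoint (blockOp W (-(adjoint (U * S))) 0 (adjoint Z))) =
        blockOp U 0 0 U * blockOp ((c : ℂ) • B) ((c : ℂ) • S) (-((c : ℂ) • S)) ((c : ℂ) • B) := by
    rw [blockOp_add_adjoint_blockOp_of_polar hA.isSelfAdjoint hpolar hpolarW, ← mul_smul_comm,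
      blockOp_smul, smul_neg]
  have hc_sa := Complex.isSelfAdjoint_ofReal c
  rw [hfactor]
  exact Unitary.mem_iff.mp <| mul_mem (blockOp_diag_mem_unitary hU)
    (blockOp_rotation_mem_unitary (hc_sa.smul hB) (hc_sa.smul hS.isSelfAdjoint)
      ((hBS.smul_left _).smul_right _) hrot)

/-- With the dilation `Ẑ = [[Z, H₀],[0, W*]]`, `Ŵ = [[W, −H₀*],[0, Z*]]`
built from `(Z,W)` in the quantum conservative hyperbola of type `r > 1`
(polar data `Z = UA`, `Â = r⁻²A⁻¹`, `H₀ = U((1+r⁻²)²I − (A+Â)²)^{1/2}`), the operator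
`Û = (r/(r+1/r))(Ẑ + Ŵ*)` on `H ⊕ H` is unitary. -/
theorem stmt9 (r : ℝ) (hr : 1 < r) (Z W U A S : H →L[ℂ] H)
    (hZW : Z * W = (((r : ℂ)) ^ 2)⁻¹ • (1 : H →L[ℂ] H))
    (hWZ : W * Z = (((r : ℂ)) ^ 2)⁻¹ • (1 : H →L[ℂ] H))
    (hZ : ‖Z‖ < 1) (hW : ‖W‖ < 1)
    (hUl : adjoint U * U = 1) (hUr : U * adjoint U = 1)
    (hA : A.IsPositive) (hAunit : IsUnit A) (hpolar : Z = U * A)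
    (hpolarW : W = ((((r ^ 2)⁻¹ : ℝ) : ℂ) • Ring.inverse A) * adjoint U)
    (hS : S.IsPositive)
    (hSsq : S ^ 2 = (((1 + (r ^ 2)⁻¹) ^ 2 : ℝ) : ℂ) • (1 : H →L[ℂ] H)
      - (A + (((r ^ 2)⁻¹ : ℝ) : ℂ) • Ring.inverse A) ^ 2)
    (hSA : Commute S A) :
    ∀ Uhat : WithLp 2 (H × H) →L[ℂ] WithLp 2 (H × H),
      Uhat = ((r / (r + 1 / r) : ℝ) : ℂ) •
        (blockOp Z (U * S) 0 (adjoint W)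
          + adjoint (blockOp W (-(adjoint (U * S))) 0 (adjoint Z))) →
      adjoint Uhat * Uhat = 1 ∧ Uhat * adjoint Uhat = 1 :=
  stmt9_general r hr Z W U A S hUl hUr hA hpolar hpolarW hS hSsq hSA
end
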